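/- Let R be the compact topological ring (ℤ/2ℤ)^ℕ with pointwise operations and the product topology, R̃ ⊆ R the subring of finitely supported sequences, and G = (R × R) ⋊ R the generalized Heisenberg group defined via the action π(f, (a, x)) = (a + f·x, x). Let B = {((0, x), 0) : x ∈ R̃} ≤ G. Then B is a Boolean subgroup of G which is not closed, its closure in G equals {((0, x), 0) : x ∈ R}, and this closure intersects the center Z(G) = {((a, 0), 0) : a ∈ R} trivially. -/

import Mathlib

/-- The compact ring `R = (ℤ/2ℤ)^ℕ` with pointwise operations and the product topology. -/
abbrev RH : Type := ℕ → ZMod 2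

/-- The carrier of the generalized Heisenberg group `G = (R × R) ⋊ R`. -/
def Heis : Type := (RH × RH) × RH

/-- The multiplication of the generalized Heisenberg group, corresponding to the action
`π(f, (a, x)) = (a + f·x, x)`:
`((a₁, x₁), f₁) · ((a₂, x₂), f₂) = ((a₁ + a₂ + f₁·x₂, x₁ + x₂), f₁ + f₂)`. -/
def heisMul (p q : Heis) : Heis :=
  ((p.1.1 + q.1.1 + p.2 * q.1.2, p.1.2 + q.1.2), p.2 + q.2)

def heisInv (p : Heis) : Heis :=
  ((-p.1.1 + p.2 * p.1.2, -p.1.2), -p.2)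

instance : Group Heis where
  mul := heisMul
  one := ((0, 0), 0)
  inv := heisInv
  mul_assoc p q r := by
    show heisMul (heisMul p q) r = heisMul p (heisMul q r)
    simp only [heisMul]
    exact Prod.ext (Prod.ext (by ring) (by ring)) (by ring)
  one_mul p := by
    show heisMul ((0, 0), 0) p = p
    simp only [heisMul]
    exact Prod.ext (Prod.ext (by ring) (by ring)) (by ring)
  mul_one p := by
    show heisMul p ((0, 0), 0) = p
    simp only [heisMul]
    exact Prod.ext (Prod.ext (by ring) (by ring)) (by ring)
  inv_mul_cancel p := by
    show heisMul (heisInv p) p = ((0, 0), 0)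
    simp only [heisMul, heisInv]
    exact Prod.ext (Prod.ext (by ring) (by ring)) (by ring)

instance : TopologicalSpace Heis := inferInstanceAs (TopologicalSpace ((RH × RH) × RH))
instance : CompactSpace Heis := inferInstanceAs (CompactSpace ((RH × RH) × RH))
instance : T2Space Heis := inferInstanceAs (T2Space ((RH × RH) × RH))

instance : IsTopologicalGroup Heis where
  continuous_mul := by
    show Continuous fun p : Heis × Heis => heisMul p.1 p.2
    unfold heisMul
    fun_prop
  continuous_inv := by
    show Continuous fun p : Heis => heisInv p
    unfold heisInv
    fun_prop

/-- The subgroup `B = {((0, x), 0) : x ∈ R̃} ≤ G`, where `R̃ ⊆ R` is the subring of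
finitely supported sequences. -/
def heisB : Subgroup Heis where
  carrier := {p : Heis | p.1.1 = 0 ∧ (Function.support p.1.2).Finite ∧ p.2 = 0}
  one_mem' := by
    refine ⟨rfl, ?_, rfl⟩
    show (Function.support (0 : RH)).Finite
    simp
  mul_mem' := by
    rintro p q ⟨ha1, ha2, ha3⟩ ⟨hb1, hb2, hb3⟩
    refine ⟨?_, ?_, ?_⟩
    · show p.1.1 + q.1.1 + p.2 * q.1.2 = 0
      rw [ha1, hb1, ha3]; ring
    · show (Function.support (p.1.2 + q.1.2)).Finite
      exact (ha2.union hb2).subset (Function.support_add _ _)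
    · show p.2 + q.2 = 0
      rw [ha3, hb3]; ring
  inv_mem' := by
    rintro p ⟨ha1, ha2, ha3⟩
    refine ⟨?_, ?_, ?_⟩
    · show -p.1.1 + p.2 * p.1.2 = 0
      rw [ha1, ha3]; ring
    · show (Function.support (-p.1.2)).Finite
      rwa [Function.support_neg]
    · show -p.2 = 0
      rw [ha3]; ring

/-!
Finitely supported sequences are dense in `R` (truncations converge in the product topology), so
the closure of `B` is the whole closed subgroup `{((0, x), 0) : x ∈ R}`, which contains
`((0, 1), 0) ∉ B`. Two elements commute iff `f₁ x₂ = f₂ x₁`; testing against `((0, 0), 1)` and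
`((0, 1), 0)` yields the center.
-/

theorem dense_setOf_support_finite {ι M : Type*} [TopologicalSpace M] [Zero M] :
    Dense {f : ι → M | (Function.support f).Finite} := by
  intro f
  have htrunc : Filter.Tendsto (fun s : Finset ι => (s : Set ι).indicator f) Filter.atTop
      (nhds f) := by
    refine tendsto_pi_nhds.2 fun i => tendsto_nhds_of_eventually_eq ?_
    filter_upwards [Filter.eventually_ge_atTop {i}] with s hs
    exact Set.indicator_of_mem (by simpa using hs) f
  exact mem_closure_of_tendsto htrunc
    (Filter.Eventually.of_forall fun s => s.finite_toSet.subset Set.support_indicator_subset)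

namespace Heis

theorem ext {p q : Heis} (h₁ : p.1.1 = q.1.1) (h₂ : p.1.2 = q.1.2) (h₃ : p.2 = q.2) : p = q :=
  Prod.ext (Prod.ext h₁ h₂) h₃

theorem mul_def (p q : Heis) :
    p * q = ((p.1.1 + q.1.1 + p.2 * q.1.2, p.1.2 + q.1.2), p.2 + q.2) := rfl

theorem mul_self (p : Heis) : p * p = ((p.2 * p.1.2, 0), 0) := by
  rw [mul_def, CharTwo.add_self_eq_zero, CharTwo.add_self_eq_zero, CharTwo.add_self_eq_zero,
    zero_add]

theorem mul_comm_iff {p q : Heis} : p * q = q * p ↔ p.2 * q.1.2 = q.2 * p.1.2 := by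
  rw [mul_def, mul_def, add_comm q.1.1, add_comm q.1.2, add_comm q.2]
  change ((_, _), _) = (((_, _), _) : (RH × RH) × RH) ↔ _
  simp only [Prod.mk.injEq, add_right_inj, and_true]

theorem coe_center : (Subgroup.center Heis : Set Heis) = {p : Heis | p.1.2 = 0 ∧ p.2 = 0} := by
  ext p
  simp only [SetLike.mem_coe, Subgroup.mem_center_iff, mul_comm_iff, Set.mem_ofPred_eq]
  constructor
  · intro h
    exact ⟨by simpa using h ((0, 0), 1), by simpa using (h ((0, 1), 0)).symm⟩
  · rintro ⟨hx, hf⟩ g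
    rw [hx, hf, mul_zero, zero_mul]

end Heis

theorem mul_self_eq_one_of_mem_heisB {b : Heis} (hb : b ∈ heisB) : b * b = 1 := by
  rw [Heis.mul_self, hb.2.2, zero_mul]
  rfl

theorem closure_heisB : closure (heisB : Set Heis) = {p : Heis | p.1.1 = 0 ∧ p.2 = 0} := by
  refine subset_antisymm (closure_minimal (fun p hp => ⟨hp.1, hp.2.2⟩) ?_) fun p hp => ?_
  · exact (isClosed_eq (by fun_prop) continuous_const).inter
      (isClosed_eq (by fun_prop) continuous_const)
  · let e : RH → Heis := fun x => ((0, x), 0)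
    have he : Continuous e := by fun_prop
    have hpe : p = e p.1.2 := Heis.ext hp.1 rfl hp.2
    have himage : e '' {x | (Function.support x).Finite} ⊆ heisB := by
      rintro _ ⟨x, hx, rfl⟩
      exact ⟨rfl, hx, rfl⟩
    rw [hpe]
    exact closure_mono himage
      (mem_closure_image he.continuousAt (dense_setOf_support_finite p.1.2))

theorem not_isClosed_heisB : ¬ IsClosed (heisB : Set Heis) := by
  intro hclosed
  have hmem : (((0, 1), 0) : Heis) ∈ closure (heisB : Set Heis) := by
    rw [closure_heisB]
    exact ⟨rfl, rfl⟩
  rw [hclosed.closure_eq] at hmem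
  exact Set.infinite_univ (by simpa using hmem.2.1)

theorem heisenberg_boolean_subgroup_properties :
    (∀ b ∈ heisB, b * b = 1) ∧
    ¬ IsClosed (heisB : Set Heis) ∧
    closure (heisB : Set Heis) = {p : Heis | p.1.1 = 0 ∧ p.2 = 0} ∧
    (Subgroup.center Heis : Set Heis) = {p : Heis | p.1.2 = 0 ∧ p.2 = 0} ∧
    (∀ p ∈ closure (heisB : Set Heis), p ∈ Subgroup.center Heis → p = 1) := by
  refine ⟨fun b hb => mul_self_eq_one_of_mem_heisB hb, not_isClosed_heisB, closure_heisB,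
    Heis.coe_center, fun p hp hpc => ?_⟩
  rw [closure_heisB] at hp
  rw [← SetLike.mem_coe, Heis.coe_center] at hpc
  exact Heis.ext hp.1 hpc.1 hp.2
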